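/- For 0<|q|<1, the q-Hahn Bessel function satisfies the three-term recursion y J(qx, y; q) - (1 + y - x) J(x,y;q) + J(q^{-1}x, y; q) = 0, where J(x,y;q) = (qy;q)_\infty \sum_{n=0}^\infty (-1)^n q^{n(n+1)/2} x^n / ((q;q)_n (qy;q)_n). -/

import Mathlib

/-- `(a;q)_∞ = ∏_{j≥0}(1 - a q^j)`. -/
noncomputable def pinf (q a : ℂ) : ℂ := ∏' j : ℕ, (1 - a * q ^ j)

/-- `(a;q)_n = ∏_{j=0}^{n-1}(1 - a q^j)`. -/
noncomputable def pochN (q a : ℂ) (n : ℕ) : ℂ := ∏ j ∈ Finset.range n, (1 - a * q ^ j)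

/-- The q-Hahn Bessel function `J(x,y;q)`. -/
noncomputable def Jq (q x y : ℂ) : ℂ :=
  pinf q (q * y) *
    ∑' n : ℕ, (-1 : ℂ) ^ n * q ^ (n * (n + 1) / 2) * x ^ n /
      (pochN q q n * pochN q (q * y) n)


/-!
Write `J(x, y; q) = (qy; q)_∞ S(x)` with `S(x) = ∑ cₙ xⁿ`. The coefficients satisfy
`cₙ₊₁ (1 - qⁿ⁺¹)(1 - y qⁿ⁺¹) = -qⁿ⁺¹ cₙ`, so `S` is entire by the ratio test.
Since `y qⁿ - (1 + y) + q⁻ⁿ = q⁻ⁿ (1 - qⁿ)(1 - y qⁿ)`, the coefficients of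
`y S(qx) - (1 + y) S(x) + S(q⁻¹x)` are `0, -c₀, -c₁, …`, i.e. this series is `-x S(x)`.
-/

open Filter Topology

lemma Nat.succ_mul_succ_succ_div_two (n : ℕ) :
    (n + 1) * (n + 1 + 1) / 2 = n * (n + 1) / 2 + (n + 1) := by
  simpa [Nat.mul_comm, Nat.add_comm] using Nat.triangle_succ (n + 1)

lemma pow_succ_ne_one_of_norm_lt_one {R : Type*} [SeminormedRing R] [NormOneClass R] {q : R}
    (h1 : ‖q‖ < 1) (n : ℕ) : q ^ (n + 1) ≠ 1 := by
  intro h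
  have hlt := (norm_pow_le' q n.succ_pos).trans_lt
    (pow_lt_one₀ (norm_nonneg q) h1 n.succ_ne_zero)
  simp [h] at hlt

lemma summable_of_succ_eq_smul_of_tendsto_zero {𝕜 E : Type*} [NormedField 𝕜]
    [SeminormedAddCommGroup E] [NormedSpace 𝕜 E] [CompleteSpace E] {f : ℕ → E} {r : ℕ → 𝕜}
    (hf : ∀ n, f (n + 1) = r n • f n) (hr : Tendsto r atTop (𝓝 0)) : Summable f := by
  refine summable_of_ratio_norm_eventually_le (r := 1 / 2) (by norm_num) ?_
  filter_upwards [(tendsto_zero_iff_norm_tendsto_zero.1 hr).eventually_le_const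
    (by norm_num : (0 : ℝ) < 1 / 2)] with n hn
  rw [hf, norm_smul]
  exact mul_le_mul_of_nonneg_right hn (norm_nonneg _)

lemma pochN_succ (q a : ℂ) (n : ℕ) : pochN q a (n + 1) = pochN q a n * (1 - a * q ^ n) :=
  Finset.prod_range_succ _ n

noncomputable def qHahnBesselCoeff (q y : ℂ) (n : ℕ) : ℂ :=
  (-1 : ℂ) ^ n * q ^ (n * (n + 1) / 2) / (pochN q q n * pochN q (q * y) n)

noncomputable def qHahnBesselSeries (q y x : ℂ) : ℂ :=
  ∑' n : ℕ, qHahnBesselCoeff q y n * x ^ n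

lemma Jq_eq_pinf_mul_qHahnBesselSeries (q x y : ℂ) :
    Jq q x y = pinf q (q * y) * qHahnBesselSeries q y x := by
  unfold Jq qHahnBesselSeries qHahnBesselCoeff
  simp only [div_mul_eq_mul_div]

section

variable {q y : ℂ} (h1 : ‖q‖ < 1) (hy : ∀ n : ℕ, y * q ^ (n + 1) ≠ 1)
include h1 hy

lemma one_sub_pow_succ_mul_one_sub_ne_zero (n : ℕ) :
    (1 - q ^ (n + 1)) * (1 - y * q ^ (n + 1)) ≠ 0 :=
  mul_ne_zero (sub_ne_zero.2 (pow_succ_ne_one_of_norm_lt_one h1 n).symm) (sub_ne_zero.2 (hy n).symm)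

lemma qHahnBesselCoeff_succ (n : ℕ) :
    qHahnBesselCoeff q y (n + 1) * ((1 - q ^ (n + 1)) * (1 - y * q ^ (n + 1))) =
      -q ^ (n + 1) * qHahnBesselCoeff q y n := by
  unfold qHahnBesselCoeff
  rw [pochN_succ, pochN_succ, Nat.succ_mul_succ_succ_div_two, pow_add q (n * (n + 1) / 2),
    show q * q ^ n = q ^ (n + 1) by ring, show q * y * q ^ n = y * q ^ (n + 1) by ring,
    mul_mul_mul_comm, ← div_div,
    div_mul_cancel₀ _ (one_sub_pow_succ_mul_one_sub_ne_zero h1 hy n)]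
  ring

lemma summable_qHahnBesselCoeff_mul_pow (x : ℂ) :
    Summable fun n => qHahnBesselCoeff q y n * x ^ n := by
  set g : ℂ → ℂ := fun t => -t * x / ((1 - t) * (1 - y * t))
  refine summable_of_succ_eq_smul_of_tendsto_zero (r := fun n => g (q ^ (n + 1))) (fun n => ?_) ?_
  · simp only [g, smul_eq_mul]
    rw [div_mul_eq_mul_div, eq_div_iff (one_sub_pow_succ_mul_one_sub_ne_zero h1 hy n)]
    linear_combination x ^ (n + 1) * qHahnBesselCoeff_succ h1 hy n
  · have hg : Tendsto g (𝓝 0) (𝓝 0) := by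
      simpa [g] using (by fun_prop (disch := norm_num) : ContinuousAt g 0).tendsto
    exact hg.comp ((tendsto_pow_atTop_nhds_zero_of_norm_lt_one h1).comp (tendsto_add_atTop_nat 1))

end

lemma qHahnBesselSeries_three_term_recurrence {q y : ℂ} (h0 : q ≠ 0) (h1 : ‖q‖ < 1)
    (hy : ∀ n : ℕ, y * q ^ (n + 1) ≠ 1) (x : ℂ) :
    y * qHahnBesselSeries q y (q * x) - (1 + y - x) * qHahnBesselSeries q y x
      + qHahnBesselSeries q y (q⁻¹ * x) = 0 := by
  have hS (z : ℂ) : HasSum (fun n => qHahnBesselCoeff q y n * z ^ n) (qHahnBesselSeries q y z) :=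
    (summable_qHahnBesselCoeff_mul_pow h1 hy z).hasSum
  have hterm (n : ℕ) : y * (qHahnBesselCoeff q y (n + 1) * (q * x) ^ (n + 1))
      - (1 + y) * (qHahnBesselCoeff q y (n + 1) * x ^ (n + 1))
      + qHahnBesselCoeff q y (n + 1) * (q⁻¹ * x) ^ (n + 1)
      = -x * (qHahnBesselCoeff q y n * x ^ n) := by
    rw [inv_mul_eq_div, div_pow]
    field_simp
    linear_combination x ^ (n + 1) * qHahnBesselCoeff_succ h1 hy n
  have hsum := ((hS (q * x)).mul_left y).sub ((hS x).mul_left (1 + y)) |>.add (hS (q⁻¹ * x))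
  rw [← hasSum_nat_add_iff' 1, Finset.sum_range_one] at hsum
  simp only [hterm] at hsum
  linear_combination hsum.unique ((hS x).mul_left (-x))

theorem stmt_11 (q y : ℂ) (h0 : 0 < ‖q‖) (h1 : ‖q‖ < 1)
    (hy : ∀ n : ℕ, y * q ^ (n + 1) ≠ 1) :
    ∀ x : ℂ, y * Jq q (q * x) y - (1 + y - x) * Jq q x y + Jq q (q⁻¹ * x) y = 0 := by
  intro x
  simp only [Jq_eq_pinf_mul_qHahnBesselSeries]
  linear_combination
    pinf q (q * y) * qHahnBesselSeries_three_term_recurrence (norm_pos_iff.1 h0) h1 hy x
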